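/- arXiv:1105.4272 — 2 statements merged into one kernel-verified Lean document; each statement's English description precedes it below -/
import Mathlib

section
/- Let V be a finite set, and for each i ≤ n let W(Q_i) be a probability vector on V, and |S_i - p_i| ≤ 1. If the forecasts p_i satisfy Σ_{v∈V} W_v(Q_i) μ_{i-1}(v) · (S_i - p_i) ≤ 0 for every i ≤ n (where μ_m(v) = Σ_{j=1}^m W_v(Q_j)(S_j - p_j)), then Σ_{v∈V} μ_n(v)² ≤ n. -/
/-!
Write `d = S i - p i` and `w = W(Q_i)`. Then `μ_i = μ_{i-1} + d w`, so
`‖μ_i‖² = ‖μ_{i-1}‖² + 2 d ⟪w, μ_{i-1}⟫ + d² ‖w‖²`. The middle term is non-positive by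
hypothesis and the last is at most `1`, since `|d| ≤ 1` and `‖w‖² ≤ (∑ w)² = 1` for a
probability vector. Hence `‖μ_n‖²` grows by at most `1` per step.
-/

open Finset

theorem sum_sq_le_one_of_sum_eq_one {ι : Type*} {s : Finset ι} {w : ι → ℝ}
    (hw0 : ∀ i ∈ s, 0 ≤ w i) (hw1 : ∑ i ∈ s, w i = 1) : ∑ i ∈ s, w i ^ 2 ≤ 1 := by
  simpa [hw1] using sum_sq_le_sq_sum_of_nonneg hw0

theorem sum_sq_add_mul_le_add_one {V : Type*} [Fintype V] {m w : V → ℝ} {d : ℝ}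
    (hw0 : ∀ v, 0 ≤ w v) (hw1 : ∑ v, w v = 1) (hd : |d| ≤ 1)
    (horth : (∑ v, w v * m v) * d ≤ 0) :
    ∑ v, (m v + w v * d) ^ 2 ≤ ∑ v, m v ^ 2 + 1 := by
  have hexpand : ∑ v, (m v + w v * d) ^ 2
      = ∑ v, m v ^ 2 + 2 * ((∑ v, w v * m v) * d) + (∑ v, w v ^ 2) * d ^ 2 := by
    simp only [add_sq, mul_pow, sum_add_distrib, sum_mul, mul_sum]
    congr 2
    exact sum_congr rfl fun v _ => by ring
  have hw2 : ∑ v, w v ^ 2 ≤ 1 := sum_sq_le_one_of_sum_eq_one (fun v _ => hw0 v) hw1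
  have hd2 : d ^ 2 ≤ 1 := (sq_le_one_iff_abs_le_one d).mpr hd
  have hquad : (∑ v, w v ^ 2) * d ^ 2 ≤ 1 :=
    mul_le_one₀ hw2 (sq_nonneg d) hd2
  linarith

/-- If the forecasts make each increment non-positive, the sum of squared
calibration deficits grows at most linearly. -/
theorem stmt_2 {V : Type*} [Fintype V] (W : ℕ → V → ℝ) (S p : ℕ → ℝ)
    (μ : ℕ → V → ℝ)
    (hW0 : ∀ i v, 0 ≤ W i v) (hW1 : ∀ i, ∑ v, W i v = 1)
    (hSp : ∀ i, |S i - p i| ≤ 1)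
    (hμ : ∀ m v, μ m v = ∑ j ∈ Finset.Icc 1 m, W j v * (S j - p j))
    (n : ℕ)
    (horth : ∀ i, 1 ≤ i → i ≤ n → (∑ v, W i v * μ (i - 1) v) * (S i - p i) ≤ 0) :
    ∑ v, (μ n v) ^ 2 ≤ (n : ℝ) := by
  induction n with
  | zero => simp [hμ]
  | succ m ih =>
    have hstep : ∀ v, μ (m + 1) v = μ m v + W (m + 1) v * (S (m + 1) - p (m + 1)) := fun v => by
      rw [hμ, hμ, sum_Icc_succ_top (by omega)]
    have hincr := sum_sq_add_mul_le_add_one (m := μ m) (hW0 (m + 1)) (hW1 (m + 1)) (hSp (m + 1))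
      (by simpa using horth (m + 1) (by omega) le_rfl)
    simp only [hstep]
    push_cast
    linarith [ih fun i hi him => horth i hi (by omega)]
end

section
/- Let (V_i) be a martingale difference sequence with V_i contained in an F_{i-1}-measurable interval of length 1, and S_k = Σ_{i=1}^k V_i. Then for any t > 0 and any n ≥ 1, P(sup_{k≥n} |S_k/k| > t) ≤ t^{-2}·exp(-2nt²). -/
/-!
Ville's maximal inequality for the nonnegative supermartingale `exp (l S_k - k K)`, where `K`
bounds the cumulant generating function at `l` of every centred Bernoulli variable. The chord of
`exp` over `[A_i, A_i + 1]` bounds the conditional moment generating function of `V_i` by that of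
a centred Bernoulli variable (the predictable interval must contain `0`), so
`P(∃ k ≥ n, S_k > k t) ≤ exp (-n (l t - K))`, and twice that for `|S_k / k|`.
For `2 t² ≤ 1` Hoeffding's `K = l² / 8` at `l = 4 t` gives `2 exp (-2 n t²) ≤ t⁻² exp (-2 n t²)`;
for `2 t² > 1` a sharper constant at the fixed tilt `l = 29 / 5` absorbs the factor `2 t²`;
for `t ≥ 1` the event is null because `|V_i| ≤ 1`.
-/

open MeasureTheory Filter

namespace MeasureTheory.Supermartingale

variable {Ω : Type*} {m0 : MeasurableSpace Ω} {μ : Measure Ω} {F : Filtration ℕ m0}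

theorem measure_exists_mem_Icc_ge_le [IsFiniteMeasure μ]
    {M : ℕ → Ω → ℝ} (hM : Supermartingale M F μ) (hnn : ∀ k ω, 0 ≤ M k ω) {ε : ℝ}
    (hε : 0 < ε) {n N : ℕ} (hnN : n ≤ N) :
    μ {ω | ∃ k ∈ Set.Icc n N, ε ≤ M k ω} ≤ ENNReal.ofReal (ε⁻¹ * ∫ ω, M n ω ∂μ) := by
  set τ : Ω → ℕ∞ := fun ω => (hittingBtwn M (Set.Ici ε) n N ω : ℕ)
  have hτ : IsStoppingTime F τ :=
    Adapted.isStoppingTime_hittingBtwn (fun k => (hM.stronglyMeasurable k).measurable)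
      measurableSet_Ici
  have hτN : ∀ ω, τ ω ≤ N := fun ω => WithTop.coe_le_coe.2 (hittingBtwn_le ω)
  have hopt : ∫ ω, stoppedValue M τ ω ∂μ ≤ ∫ ω, M n ω ∂μ := by
    have h := hM.neg.expected_stoppedValue_mono (isStoppingTime_const F n) hτ
      (fun ω => WithTop.coe_le_coe.2 (le_hittingBtwn hnN ω)) hτN
    simp only [stoppedValue, Pi.neg_apply, integral_neg, neg_le_neg_iff] at h
    exact h
  have hmarkov := mul_meas_ge_le_integral_of_nonneg (Eventually.of_forall fun ω => hnn _ ω)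
    (integrable_stoppedValue ℕ hτ hM.integrable hτN) ε
  have hsub : {ω | ∃ k ∈ Set.Icc n N, ε ≤ M k ω} ⊆ {ω | ε ≤ stoppedValue M τ ω} :=
    fun ω hω => stoppedValue_hittingBtwn_mem (s := Set.Ici ε) hω
  calc μ {ω | ∃ k ∈ Set.Icc n N, ε ≤ M k ω} ≤ μ {ω | ε ≤ stoppedValue M τ ω} :=
        measure_mono hsub
    _ = ENNReal.ofReal (μ.real {ω | ε ≤ stoppedValue M τ ω}) :=
        (ofReal_measureReal (measure_ne_top _ _)).symm
    _ ≤ ENNReal.ofReal (ε⁻¹ * ∫ ω, M n ω ∂μ) := by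
      gcongr
      rw [le_inv_mul_iff₀ hε]
      exact hmarkov.trans hopt

theorem measure_exists_ge_le [IsFiniteMeasure μ]
    {M : ℕ → Ω → ℝ} (hM : Supermartingale M F μ) (hnn : ∀ k ω, 0 ≤ M k ω) {ε : ℝ}
    (hε : 0 < ε) (n : ℕ) :
    μ {ω | ∃ k, n ≤ k ∧ ε ≤ M k ω} ≤ ENNReal.ofReal (ε⁻¹ * ∫ ω, M n ω ∂μ) := by
  have hunion : {ω | ∃ k, n ≤ k ∧ ε ≤ M k ω} =
      ⋃ j : ℕ, {ω | ∃ k ∈ Set.Icc n (n + j), ε ≤ M k ω} := by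
    ext ω
    simp only [Set.mem_ofPred_eq, Set.mem_iUnion, Set.mem_Icc]
    exact ⟨fun ⟨k, hk, h⟩ => ⟨k, k, ⟨hk, by omega⟩, h⟩, fun ⟨_, k, hk, h⟩ => ⟨k, hk.1, h⟩⟩
  have hmono : Monotone fun j : ℕ => {ω | ∃ k ∈ Set.Icc n (n + j), ε ≤ M k ω} :=
    fun _ _ hij _ ⟨k, hk, h⟩ => ⟨k, ⟨hk.1, hk.2.trans (by omega)⟩, h⟩
  rw [hunion, hmono.measure_iUnion]
  exact iSup_le fun j => hM.measure_exists_mem_Icc_ge_le hnn hε (Nat.le_add_right n j)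

end MeasureTheory.Supermartingale

namespace MaximalHoeffdingAzuma

open ProbabilityTheory Real

variable {Ω : Type*} {m0 : MeasurableSpace Ω} {μ : Measure Ω} {F : Filtration ℕ m0}

/-- Every centred Bernoulli variable has cumulant generating function at most `K` at `l`. -/
def BernoulliCGFLe (l K : ℝ) : Prop :=
  ∀ p ∈ Set.Icc (0 : ℝ) 1, 1 - p + p * exp l ≤ exp (l * p + K)

theorem exp_mul_le_chord {l a v : ℝ} (hav : a ≤ v) (hva : v ≤ a + 1) :
    exp (l * v) ≤ exp (l * a) * (1 + (v - a) * (exp l - 1)) := by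
  have h := convexOn_exp.2 (Set.mem_univ (l * a)) (Set.mem_univ (l * a + l))
    (sub_nonneg.2 hva) (sub_nonneg.2 hav) (by ring)
  rw [smul_eq_mul, smul_eq_mul, show (a + 1 - v) * (l * a) + (v - a) * (l * a + l) = l * v by ring,
    exp_add] at h
  exact h.trans_eq (by ring)

theorem BernoulliCGFLe.exp_mul_mul_le {l K a : ℝ} (hlK : BernoulliCGFLe l K)
    (ha : -a ∈ Set.Icc (0 : ℝ) 1) : exp (l * a) * (1 - a * (exp l - 1)) ≤ exp K :=
  calc exp (l * a) * (1 - a * (exp l - 1)) = exp (l * a) * (1 - -a + -a * exp l) := by ring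
    _ ≤ exp (l * a) * exp (l * -a + K) := by gcongr; exact hlK _ ha
    _ = exp K := by rw [← exp_add]; ring_nf

theorem bernoulliCGFLe_sq_div_eight (l : ℝ) : BernoulliCGFLe l (l ^ 2 / 8) := by
  rintro p ⟨h0, h1⟩
  have hX := hasSubgaussianMGF_of_mem_Icc_of_integral_eq_zero
    (μ := bernoulliMeasure (1 : ℝ) 0 ⟨p, h0, h1⟩) (X := fun x => x - p)
    (a := -p) (b := 1 - p) (by fun_prop) ?_ ?_
  · have hmgf := hX.mgf_le l
    simp only [mgf, integral_bernoulliMeasure, smul_eq_mul, sub_neg_eq_add, sub_add_cancel,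
      nnnorm_one] at hmgf
    have hexp1 : exp (l * p) * exp (l * (1 - p)) = exp l := by rw [← exp_add]; ring_nf
    have hexp0 : exp (l * p) * exp (l * (0 - p)) = 1 := by rw [← exp_add]; ring_nf; exact exp_zero
    calc 1 - p + p * exp l
        = exp (l * p) * (p * exp (l * (1 - p)) + (1 - p) * exp (l * (0 - p))) := by
          linear_combination (-p) * hexp1 - (1 - p) * hexp0
      _ ≤ exp (l * p) * _ := mul_le_mul_of_nonneg_left hmgf (exp_pos _).le
      _ = exp (l * p + l ^ 2 / 8) := by rw [← exp_add]; norm_num; ring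
  · rw [ae_iff]
    exact bernoulliMeasure_apply_of_notMem_of_notMem _ (by measurability) (by simp) (by simp)
  · simp only [integral_bernoulliMeasure, smul_eq_mul]
    ring

/-- Tangent-line bound `log x ≤ log c + x / c - 1`; optimal for `c = (exp l - 1) / l`. -/
theorem bernoulliCGFLe_of_exp_sub_one_le {c l : ℝ} (hc : 0 < c) (hcl : exp l - 1 ≤ c * l) :
    BernoulliCGFLe l (log c + c⁻¹ - 1) := by
  rintro p ⟨h0, -⟩
  set x := 1 - p + p * exp l
  have hx : x / c ≤ l * p + c⁻¹ := by
    rw [div_le_iff₀ hc, add_mul, inv_mul_cancel₀ hc.ne']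
    nlinarith [mul_le_mul_of_nonneg_left hcl h0]
  calc x = c * (x / c - 1 + 1) := by field_simp; ring
    _ ≤ c * exp (x / c - 1) := by gcongr; exact add_one_le_exp _
    _ ≤ exp (log c) * exp (l * p + c⁻¹ - 1) := by rw [exp_log hc]; gcongr
    _ = exp (l * p + (log c + c⁻¹ - 1)) := by rw [← exp_add]; ring_nf

theorem exp_29_div_5_le : exp (29 / 5) ≤ 8261 / 25 := by
  have h5 : exp 5 ≤ 2.7182818286 ^ 5 := by
    rw [show (5 : ℝ) = (5 : ℕ) * 1 by norm_num, exp_nat_mul]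
    gcongr
    exact exp_one_lt_d9.le
  have h45 : exp (4 / 5) ≤ 2.2256 := by
    refine (exp_bound' (x := 4 / 5) (by norm_num) (by norm_num) (n := 6) (by norm_num)).trans ?_
    norm_num [Finset.sum_range_succ, Nat.factorial]
  calc exp (29 / 5) = exp 5 * exp (4 / 5) := by rw [← exp_add]; norm_num
    _ ≤ 2.7182818286 ^ 5 * 2.2256 := by gcongr
    _ ≤ 8261 / 25 := by norm_num

theorem log_284_div_5_le : log (284 / 5) ≤ 4041 / 1000 := by
  rw [log_le_iff_le_exp (by norm_num)]
  have h4 : 2.7182818283 ^ 4 ≤ exp 4 := by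
    rw [show (4 : ℝ) = (4 : ℕ) * 1 by norm_num, exp_nat_mul]
    gcongr
    exact exp_one_gt_d9.le
  calc (284 / 5 : ℝ) ≤ 2.7182818283 ^ 4 * (41 / 1000 + 1) := by norm_num
    _ ≤ exp 4 * exp (41 / 1000) := by gcongr; exact add_one_le_exp _
    _ = exp (4041 / 1000) := by rw [← exp_add]; norm_num

theorem log_21_div_25_le : log (21 / 25) ≤ -(174 / 1000) := by
  have h : exp (174 / 1000) ≤ 25 / 21 := by
    refine (exp_bound' (x := 174 / 1000) (by norm_num) (by norm_num) (n := 4)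
      (by norm_num)).trans ?_
    norm_num [Finset.sum_range_succ, Nat.factorial]
  rw [log_le_iff_le_exp (by norm_num), exp_neg, le_inv_comm₀ (by norm_num) (exp_pos _)]
  exact h.trans (by norm_num)

theorem bernoulliCGFLe_29_div_5 : BernoulliCGFLe (29 / 5) (3059 / 1000) := by
  have hK : log (284 / 5) + (284 / 5)⁻¹ - 1 ≤ (3059 / 1000 : ℝ) := by
    linarith [log_284_div_5_le]
  intro p hp
  refine (bernoulliCGFLe_of_exp_sub_one_le (c := 284 / 5) (by norm_num) ?_ p hp).trans ?_
  · linarith [exp_29_div_5_le]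
  · gcongr

/-- Tangent line of `log` at `21 / 25`. -/
theorem log_two_mul_sq_le {t : ℝ} (ht0 : 0 ≤ t) (ht : 1 / 2 ≤ t ^ 2) (ht1 : t ≤ 1) :
    log (2 * t ^ 2) ≤ 29 / 5 * t - 3059 / 1000 - 2 * t ^ 2 := by
  have ht7 : 707 / 1000 ≤ t := by nlinarith
  have hlog : log t ≤ log (21 / 25) + 25 / 21 * t - 1 := by
    have h := log_le_sub_one_of_pos (x := t / (21 / 25)) (by positivity)
    rw [log_div (by positivity) (by norm_num)] at h
    linarith
  rw [log_mul (by norm_num) (by positivity), log_pow]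
  nlinarith [log_21_div_25_le, log_two_lt_d9, mul_nonneg (sub_nonneg.2 ht7) (sub_nonneg.2 ht1)]

theorem exists_bernoulliCGFLe {t : ℝ} (ht : 0 < t) (ht1 : t < 1) :
    ∃ l K, 0 ≤ l ∧ BernoulliCGFLe l K ∧ 0 ≤ l * t - K - 2 * t ^ 2 ∧
      log (2 * t ^ 2) ≤ l * t - K - 2 * t ^ 2 := by
  rcases le_or_gt (t ^ 2) (1 / 2) with hsmall | hlarge
  · refine ⟨4 * t, 2 * t ^ 2, by positivity, ?_, le_of_eq (by ring), ?_⟩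
    · convert bernoulliCGFLe_sq_div_eight (4 * t) using 2; ring
    · ring_nf
      exact log_nonpos (by positivity) (by linarith)
  · have hrate := log_two_mul_sq_le ht.le hlarge.le ht1.le
    exact ⟨29 / 5, 3059 / 1000, by norm_num, bernoulliCGFLe_29_div_5,
      (log_nonneg (by linarith)).trans hrate, hrate⟩

theorem two_mul_exp_neg_le {r a b : ℝ} {n : ℕ} (hr : 0 < r) (hn : 1 ≤ n) (hab : 0 ≤ a - b)
    (hlog : log (2 * r) ≤ a - b) : 2 * exp (-(n * a)) ≤ r⁻¹ * exp (-(n * b)) := by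
  have hn' : (1 : ℝ) ≤ n := by exact_mod_cast hn
  have hexp : log (2 * r) - n * a ≤ -(n * b) := by nlinarith
  rw [le_inv_mul_iff₀ hr]
  calc r * (2 * exp (-(n * a))) = exp (log (2 * r) - n * a) := by
        rw [exp_sub, exp_log (by positivity), exp_neg]; field_simp
    _ ≤ exp (-(n * b)) := exp_le_exp.2 hexp

section Conditional

variable {m : MeasurableSpace Ω}

theorem ae_le_zero_of_le_of_condExp_eq_zero [IsFiniteMeasure μ] (hm : m ≤ m0) {X A : Ω → ℝ}
    (hX : Integrable X μ) (hXm : μ[X|m] =ᵐ[μ] 0) (hA : StronglyMeasurable[m] A)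
    (hAX : ∀ᵐ ω ∂μ, A ω ≤ X ω) : ∀ᵐ ω ∂μ, A ω ≤ 0 := by
  have hs : MeasurableSet[m] {ω | 0 < A ω} := measurableSet_lt measurable_const hA.measurable
  have hs0 := hm _ hs
  have hint : ∫ ω in {ω | 0 < A ω}, X ω ∂μ = 0 := by
    rw [← setIntegral_condExp hm hX hs]
    exact integral_eq_zero_of_ae (ae_restrict_of_ae hXm)
  have hnn : 0 ≤ᵐ[μ.restrict {ω | 0 < A ω}] X :=
    (ae_restrict_iff' hs0).2 (hAX.mono fun ω h hω => hω.le.trans h)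
  have hX0 := (ae_restrict_iff' hs0).1
    ((setIntegral_eq_zero_iff_of_nonneg_ae hnn hX.integrableOn).1 hint)
  filter_upwards [hX0, hAX] with ω h0 hle
  by_contra! hpos
  linarith [show X ω = 0 from h0 hpos]

theorem ae_mem_Icc_of_condExp_eq_zero [IsFiniteMeasure μ] (hm : m ≤ m0) {X A : Ω → ℝ}
    (hX : Integrable X μ) (hXm : μ[X|m] =ᵐ[μ] 0) (hA : StronglyMeasurable[m] A)
    (hXA : ∀ᵐ ω ∂μ, X ω ∈ Set.Icc (A ω) (A ω + 1)) : ∀ᵐ ω ∂μ, -A ω ∈ Set.Icc 0 1 := by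
  have hup := ae_le_zero_of_le_of_condExp_eq_zero hm hX hXm hA (hXA.mono fun ω h => h.1)
  have hlo := ae_le_zero_of_le_of_condExp_eq_zero (A := fun ω => -A ω - 1) hm hX.neg
    ((condExp_neg X m).trans (hXm.mono fun ω h => by simp [h]))
    (hA.neg.sub stronglyMeasurable_const)
    (hXA.mono fun ω h => by simp only [Pi.neg_apply]; linarith [h.2])
  filter_upwards [hup, hlo] with ω h1 h2
  constructor <;> linarith

theorem condExp_exp_mul_le [IsFiniteMeasure μ] (hm : m ≤ m0) {X A : Ω → ℝ} {l K : ℝ}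
    (hX : Integrable X μ) (hXm : μ[X|m] =ᵐ[μ] 0) (hA : StronglyMeasurable[m] A)
    (hXA : ∀ᵐ ω ∂μ, X ω ∈ Set.Icc (A ω) (A ω + 1)) (hlK : BernoulliCGFLe l K) :
    μ[fun ω => exp (l * X ω)|m] ≤ᵐ[μ] fun _ => exp K := by
  set c : Ω → ℝ := fun ω => exp (l * A ω) * (1 - A ω * (exp l - 1))
  set d : Ω → ℝ := fun ω => exp (l * A ω) * (exp l - 1)
  have hE : StronglyMeasurable[m] fun ω => exp (l * A ω) :=
    continuous_exp.comp_stronglyMeasurable (hA.const_mul l)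
  have hc : StronglyMeasurable[m] c := hE.mul (stronglyMeasurable_const.sub (hA.mul_const _))
  have hd : StronglyMeasurable[m] d := hE.mul_const _
  have hAI := ae_mem_Icc_of_condExp_eq_zero hm hX hXm hA hXA
  have hcK : ∀ᵐ ω ∂μ, 0 ≤ c ω ∧ c ω ≤ exp K := by
    filter_upwards [hAI] with ω hp
    exact ⟨mul_nonneg (exp_pos _).le (by nlinarith [hp.1, hp.2, exp_pos l]),
      hlK.exp_mul_mul_le hp⟩
  have hdb : ∀ᵐ ω ∂μ, ‖d ω‖ ≤ exp |l| * |exp l - 1| := by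
    filter_upwards [hAI] with ω ⟨h0, h1⟩
    simp only [d, norm_mul, norm_eq_abs, abs_exp]
    gcongr
    nlinarith [abs_nonneg l, le_abs_self l, neg_abs_le l]
  have hcI : Integrable c μ := Integrable.of_bound (hc.mono hm).aestronglyMeasurable (exp K)
    (hcK.mono fun ω h => by rw [norm_eq_abs, abs_of_nonneg h.1]; exact h.2)
  have hdI : Integrable (d * X) μ := hX.bdd_mul (hd.mono hm).aestronglyMeasurable hdb
  have hchord : (fun ω => exp (l * X ω)) ≤ᵐ[μ] c + d * X := by
    filter_upwards [hXA] with ω h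
    exact (exp_mul_le_chord h.1 h.2).trans_eq
      (by simp only [c, d, Pi.add_apply, Pi.mul_apply]; ring)
  have hexpI : Integrable (fun ω => exp (l * X ω)) μ :=
    (hcI.add hdI).mono' (continuous_exp.comp_aestronglyMeasurable (hX.1.const_mul l))
      (hchord.mono fun ω h => by rwa [norm_eq_abs, abs_exp])
  calc μ[fun ω => exp (l * X ω)|m]
      ≤ᵐ[μ] μ[c + d * X|m] := condExp_mono hexpI (hcI.add hdI) hchord
    _ =ᵐ[μ] c := by
      filter_upwards [condExp_add hcI hdI m, condExp_mul_of_stronglyMeasurable_left hd hdI hX, hXm]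
        with ω h1 h2 h3
      rw [h1, Pi.add_apply, condExp_of_stronglyMeasurable hm hc hcI, h2, Pi.mul_apply, h3]
      simp
    _ ≤ᵐ[μ] fun _ => exp K := hcK.mono fun ω h => h.2

end Conditional

theorem abs_sum_Icc_le {V : ℕ → Ω → ℝ} {ω : Ω} (hV : ∀ i, 1 ≤ i → |V i ω| ≤ 1) (k : ℕ) :
    |∑ i ∈ Finset.Icc 1 k, V i ω| ≤ k := by
  calc |∑ i ∈ Finset.Icc 1 k, V i ω| ≤ ∑ i ∈ Finset.Icc 1 k, |V i ω| :=
        Finset.abs_sum_le_sum_abs _ _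
    _ ≤ ∑ _i ∈ Finset.Icc 1 k, (1 : ℝ) :=
        Finset.sum_le_sum fun i hi => hV i (Finset.mem_Icc.1 hi).1
    _ = k := by simp

theorem supermartingale_exp_mul_sum_sub [IsFiniteMeasure μ] {V : ℕ → Ω → ℝ} {l K : ℝ}
    (hadp : StronglyAdapted F V) (hbdd : ∀ᵐ ω ∂μ, ∀ i, 1 ≤ i → |V i ω| ≤ 1)
    (hmgf : ∀ k, μ[fun ω => exp (l * V (k + 1) ω)|F k] ≤ᵐ[μ] fun _ => exp K) :
    Supermartingale (fun k ω => exp (l * ∑ i ∈ Finset.Icc 1 k, V i ω - k * K)) F μ := by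
  set M : ℕ → Ω → ℝ := fun k ω => exp (l * ∑ i ∈ Finset.Icc 1 k, V i ω - k * K)
  have hMadp : StronglyAdapted F M := fun k =>
    continuous_exp.comp_stronglyMeasurable
      (((Finset.stronglyMeasurable_fun_sum _ fun i hi =>
        (hadp i).mono (F.mono (Finset.mem_Icc.1 hi).2)).const_mul l).sub stronglyMeasurable_const)
  have hMbdd : ∀ k, ∀ᵐ ω ∂μ, ‖M k ω‖ ≤ exp (|l| * k + k * |K|) := fun k => by
    filter_upwards [hbdd] with ω hω
    rw [norm_eq_abs, abs_exp]
    gcongr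
    have hlS : l * ∑ i ∈ Finset.Icc 1 k, V i ω ≤ |l| * k := (le_abs_self _).trans
      (by rw [abs_mul]; exact mul_le_mul_of_nonneg_left (abs_sum_Icc_le hω k) (abs_nonneg l))
    have hkK : -(k * K) ≤ k * |K| := by
      rw [← mul_neg]; exact mul_le_mul_of_nonneg_left (neg_le_abs K) k.cast_nonneg
    linarith
  have hMint : ∀ k, Integrable (M k) μ := fun k =>
    Integrable.of_bound ((hMadp k).mono (F.le k)).aestronglyMeasurable _ (hMbdd k)
  refine supermartingale_nat hMadp hMint fun k => ?_
  set Y : Ω → ℝ := fun ω => exp (l * V (k + 1) ω)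
  have hY : Integrable Y μ := Integrable.of_bound
    (continuous_exp.comp_aestronglyMeasurable
      (((hadp (k + 1)).mono (F.le (k + 1))).aestronglyMeasurable.const_mul l)) (exp |l|)
    (hbdd.mono fun ω h => by
      rw [norm_eq_abs, abs_exp, exp_le_exp]
      exact (le_abs_self _).trans
        (by rw [abs_mul]; exact mul_le_of_le_one_right (abs_nonneg l) (h _ (by omega))))
  have hMY : M (k + 1) = (fun ω => exp (-K) * M k ω) * Y := by
    funext ω
    simp only [M, Y, Pi.mul_apply, ← exp_add, Finset.sum_Icc_succ_top (Nat.le_add_left 1 k)]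
    push_cast
    ring_nf
  have hcM : StronglyMeasurable[F k] fun ω => exp (-K) * M k ω := (hMadp k).const_mul _
  rw [hMY]
  filter_upwards [condExp_mul_of_stronglyMeasurable_left hcM (hMY ▸ hMint (k + 1)) hY, hmgf k]
    with ω h1 h2
  rw [h1, Pi.mul_apply]
  calc exp (-K) * M k ω * μ[Y|F k] ω ≤ exp (-K) * M k ω * exp K := by gcongr
    _ = M k ω := by rw [mul_right_comm, ← exp_add]; simp

structure IsUnitRangeMartingaleDiff (μ : Measure Ω) (F : Filtration ℕ m0) (V A : ℕ → Ω → ℝ) :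
    Prop where
  stronglyAdapted : StronglyAdapted F V
  integrable : ∀ i, Integrable (V i) μ
  condExp_eq_zero : ∀ i, 1 ≤ i → μ[V i | F (i - 1)] =ᵐ[μ] 0
  predictable : ∀ i, 1 ≤ i → StronglyMeasurable[F (i - 1)] (A i)
  mem_Icc : ∀ i, ∀ᵐ ω ∂μ, V i ω ∈ Set.Icc (A i ω) (A i ω + 1)

namespace IsUnitRangeMartingaleDiff

variable {V A : ℕ → Ω → ℝ}

theorem neg (hV : IsUnitRangeMartingaleDiff μ F V A) :
    IsUnitRangeMartingaleDiff μ F (fun i ω => -V i ω) (fun i ω => -A i ω - 1) where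
  stronglyAdapted i := (hV.stronglyAdapted i).neg
  integrable i := (hV.integrable i).neg
  condExp_eq_zero i hi :=
    (condExp_neg (V i) _).trans ((hV.condExp_eq_zero i hi).mono fun ω h => by simp [h])
  predictable i hi := (hV.predictable i hi).neg.sub stronglyMeasurable_const
  mem_Icc i := (hV.mem_Icc i).mono fun ω h => ⟨by linarith [h.2], by linarith [h.1]⟩

theorem condExp_exp_mul_succ_le [IsFiniteMeasure μ] (hV : IsUnitRangeMartingaleDiff μ F V A)
    {l K : ℝ} (hlK : BernoulliCGFLe l K) (k : ℕ) :
    μ[fun ω => exp (l * V (k + 1) ω)|F k] ≤ᵐ[μ] fun _ => exp K :=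
  condExp_exp_mul_le (F.le k) (hV.integrable _) (hV.condExp_eq_zero _ (Nat.le_add_left 1 k))
    (hV.predictable _ (Nat.le_add_left 1 k)) (hV.mem_Icc _) hlK

theorem ae_abs_le_one [IsFiniteMeasure μ] (hV : IsUnitRangeMartingaleDiff μ F V A) :
    ∀ᵐ ω ∂μ, ∀ i, 1 ≤ i → |V i ω| ≤ 1 := by
  rw [ae_all_iff]
  intro i
  rcases Nat.eq_zero_or_pos i with rfl | hi
  · exact Eventually.of_forall fun ω h => absurd h (by norm_num)
  filter_upwards [ae_mem_Icc_of_condExp_eq_zero (F.le _) (hV.integrable i)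
    (hV.condExp_eq_zero i hi) (hV.predictable i hi) (hV.mem_Icc i), hV.mem_Icc i] with ω hA hVA _
  exact abs_le.2 ⟨by linarith [hA.2, hVA.1], by linarith [hA.1, hVA.2]⟩

theorem measure_exists_mul_lt_sum_le [IsProbabilityMeasure μ]
    (hV : IsUnitRangeMartingaleDiff μ F V A) {l K t : ℝ} (hlK : BernoulliCGFLe l K) (hl : 0 ≤ l)
    (hKt : K ≤ l * t) (n : ℕ) :
    μ {ω | ∃ k, n ≤ k ∧ k * t < ∑ i ∈ Finset.Icc 1 k, V i ω} ≤
      ENNReal.ofReal (exp (-(n * (l * t - K)))) := by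
  set M : ℕ → Ω → ℝ := fun k ω => exp (l * ∑ i ∈ Finset.Icc 1 k, V i ω - k * K)
  have hM : Supermartingale M F μ := supermartingale_exp_mul_sum_sub hV.stronglyAdapted
    hV.ae_abs_le_one (hV.condExp_exp_mul_succ_le hlK)
  have hMn : ∫ ω, M n ω ∂μ ≤ 1 := by
    simpa [M] using hM.setIntegral_le (Nat.zero_le n) MeasurableSet.univ
  have hsub : {ω | ∃ k, n ≤ k ∧ k * t < ∑ i ∈ Finset.Icc 1 k, V i ω} ⊆
      {ω | ∃ k, n ≤ k ∧ exp (n * (l * t - K)) ≤ M k ω} := by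
    rintro ω ⟨k, hnk, hk⟩
    refine ⟨k, hnk, exp_le_exp.2 ?_⟩
    have hnk' : (n : ℝ) ≤ k := by exact_mod_cast hnk
    nlinarith [mul_le_mul_of_nonneg_left hk.le hl,
      mul_le_mul_of_nonneg_right hnk' (sub_nonneg.2 hKt)]
  calc _ ≤ _ := measure_mono hsub
    _ ≤ _ := hM.measure_exists_ge_le (fun _ _ => (exp_pos _).le) (exp_pos _) n
    _ ≤ _ := by
      gcongr
      rw [exp_neg]
      exact mul_le_of_le_one_right (inv_nonneg.2 (exp_pos _).le) hMn

theorem measure_exists_lt_abs_div_le [IsProbabilityMeasure μ]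
    (hV : IsUnitRangeMartingaleDiff μ F V A) {l K t : ℝ} (hlK : BernoulliCGFLe l K) (hl : 0 ≤ l)
    (hKt : K ≤ l * t) {n : ℕ} (hn : 1 ≤ n) :
    μ {ω | ∃ k, n ≤ k ∧ t < |(∑ i ∈ Finset.Icc 1 k, V i ω) / k|} ≤
      ENNReal.ofReal (2 * exp (-(n * (l * t - K)))) := by
  have hsplit : {ω | ∃ k, n ≤ k ∧ t < |(∑ i ∈ Finset.Icc 1 k, V i ω) / k|} ⊆
      {ω | ∃ k, n ≤ k ∧ k * t < ∑ i ∈ Finset.Icc 1 k, V i ω} ∪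
        {ω | ∃ k, n ≤ k ∧ k * t < ∑ i ∈ Finset.Icc 1 k, -V i ω} := by
    rintro ω ⟨k, hnk, hk⟩
    have hk0 : (0 : ℝ) < k := by exact_mod_cast hn.trans hnk
    rw [abs_div, Nat.abs_cast, lt_div_iff₀ hk0, mul_comm] at hk
    rcases lt_abs.1 hk with h | h
    · exact Or.inl ⟨k, hnk, h⟩
    · exact Or.inr ⟨k, hnk, by rwa [Finset.sum_neg_distrib]⟩
  calc _ ≤ _ := measure_mono hsplit
    _ ≤ _ := measure_union_le _ _
    _ ≤ _ := add_le_add (hV.measure_exists_mul_lt_sum_le hlK hl hKt n)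
      (hV.neg.measure_exists_mul_lt_sum_le hlK hl hKt n)
    _ = _ := by rw [← ENNReal.ofReal_add (exp_pos _).le (exp_pos _).le, two_mul]

theorem measure_exists_lt_abs_div_eq_zero [IsFiniteMeasure μ]
    (hV : IsUnitRangeMartingaleDiff μ F V A) {t : ℝ} (ht : 1 ≤ t) (n : ℕ) :
    μ {ω | ∃ k, n ≤ k ∧ t < |(∑ i ∈ Finset.Icc 1 k, V i ω) / k|} = 0 := by
  refine measure_eq_zero_iff_ae_notMem.2 ?_
  filter_upwards [hV.ae_abs_le_one] with ω hω
  rintro ⟨k, -, hk⟩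
  have hle : |(∑ i ∈ Finset.Icc 1 k, V i ω) / k| ≤ 1 := by
    rw [abs_div, Nat.abs_cast]
    exact div_le_one_of_le₀ (abs_sum_Icc_le hω k) k.cast_nonneg
  linarith

end IsUnitRangeMartingaleDiff

end MaximalHoeffdingAzuma

open MaximalHoeffdingAzuma

/-- Maximal (law-of-large-numbers type) version of the Hoeffding–Azuma tail
bound. -/
theorem stmt_13 {Ω : Type*} {m0 : MeasurableSpace Ω}
    (μ : Measure Ω) [IsProbabilityMeasure μ]
    (F : Filtration ℕ m0) (V A : ℕ → Ω → ℝ)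
    (hadp : ∀ i, StronglyMeasurable[F i] (V i))
    (hint : ∀ i, Integrable (V i) μ)
    (hmd : ∀ i, 1 ≤ i → μ[V i | F (i - 1)] =ᵐ[μ] 0)
    (hA : ∀ i, 1 ≤ i → StronglyMeasurable[F (i - 1)] (A i))
    (hrange : ∀ i, ∀ᵐ ω ∂μ, V i ω ∈ Set.Icc (A i ω) (A i ω + 1)) :
    ∀ t : ℝ, 0 < t → ∀ n : ℕ, 1 ≤ n →
      μ {ω | ∃ k, n ≤ k ∧ t < |(∑ i ∈ Finset.Icc 1 k, V i ω) / k|} ≤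
        ENNReal.ofReal (t⁻¹ ^ 2 * Real.exp (-2 * n * t ^ 2)) := by
  intro t ht n hn
  have hV : IsUnitRangeMartingaleDiff μ F V A := ⟨hadp, hint, hmd, hA, hrange⟩
  rcases le_or_gt 1 t with ht1 | ht1
  · rw [hV.measure_exists_lt_abs_div_eq_zero ht1 n]
    exact zero_le
  obtain ⟨l, K, hl, hlK, hrate, hlog⟩ := exists_bernoulliCGFLe ht ht1
  refine (hV.measure_exists_lt_abs_div_le hlK hl (by nlinarith) hn).trans
    (ENNReal.ofReal_le_ofReal ?_)
  have h := two_mul_exp_neg_le (a := l * t - K) (b := 2 * t ^ 2) (pow_pos ht 2) hn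
    (by linarith) (by linarith)
  rw [inv_pow]
  convert h using 3
  ring
end
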